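/- Let A be an n×n real symmetric matrix with every diagonal entry nonzero such that dev(A)=−dev(A), and let B=(1/√2)[[1,1],[1,−1]]. Then A⊗B ∈ S(G⊠P₂) when A∈S(G), and dev(A⊗B)=dev(A)·{−1,1}=dev(A); hence q(G⊠P₂) ≤ q(A). -/

import Mathlib

/-! `A ⊗ B` is similar to `A ⊗ diag(1, -1)`, the block matrix `diag(A, -A)`, whose spectrum
`σ(A) ∪ -σ(A)` is `σ(A)` by hypothesis. Because `B` has no zero entry and `A` no zero diagonal
entry, the off-diagonal support of `A ⊗ B` is exactly the edge set of `G ⊠ P₂`. -/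

open Matrix Kronecker

/-- `S(G)`: real symmetric matrices whose off-diagonal nonzero pattern is the edge set of `G`. -/
def inS {V : Type*} (G : SimpleGraph V) (A : Matrix V V ℝ) : Prop :=
  A.IsSymm ∧ ∀ i j, i ≠ j → (A i j ≠ 0 ↔ G.Adj i j)

/-- `q(G)`: the minimum number of distinct eigenvalues among matrices in `S(G)`. -/
noncomputable def qGraph {V : Type*} [Fintype V] [DecidableEq V] (G : SimpleGraph V) : ℕ :=
  sInf {k : ℕ | ∃ A : Matrix V V ℝ, inS G A ∧ (spectrum ℝ A).ncard = k}

/-- The strong product of two simple graphs. -/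
def strongProd {V W : Type*} (G : SimpleGraph V) (G' : SimpleGraph W) :
    SimpleGraph (V × W) where
  Adj p q := (p.1 = q.1 ∧ G'.Adj p.2 q.2) ∨ (p.2 = q.2 ∧ G.Adj p.1 q.1) ∨
      (G.Adj p.1 q.1 ∧ G'.Adj p.2 q.2)
  symm := by
    constructor
    rintro p q (⟨h1, h2⟩ | ⟨h1, h2⟩ | ⟨h1, h2⟩)
    · exact Or.inl ⟨h1.symm, h2.symm⟩
    · exact Or.inr (Or.inl ⟨h1.symm, h2.symm⟩)
    · exact Or.inr (Or.inr ⟨h1.symm, h2.symm⟩)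
  loopless := by
    constructor
    rintro p (⟨-, h⟩ | ⟨-, h⟩ | ⟨h, -⟩)
    · exact G'.ne_of_adj h rfl
    · exact G.ne_of_adj h rfl
    · exact G.ne_of_adj h rfl


section Spectrum

variable {K : Type*} [Field K] {m o : Type*} [Fintype m] [DecidableEq m] [Fintype o] [DecidableEq o]

lemma spectrum_eq_of_mul_eq_mul {R A : Type*} [CommSemiring R] [Ring A] [Algebra R A]
    {a b u : A} (hu : IsUnit u) (h : a * u = u * b) : spectrum R a = spectrum R b := by
  obtain ⟨u, rfl⟩ := hu
  rw [← spectrum.units_conjugate (u := u) (a := b)]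
  exact congrArg _ ((Units.eq_mul_inv_iff_mul_eq u).mpr h)

lemma spectrum_blockDiagonal (M : o → Matrix m m K) :
    spectrum K (blockDiagonal M) = ⋃ k, spectrum K (M k) := by
  ext x
  have hsub :
      algebraMap K _ x - blockDiagonal M = blockDiagonal fun k => algebraMap K _ x - M k := by
    simp only [Algebra.algebraMap_eq_smul_one]
    rw [← blockDiagonal_one, ← blockDiagonal_smul, ← blockDiagonal_sub]
    rfl
  simp only [Set.mem_iUnion, spectrum.mem_iff, isUnit_iff_isUnit_det, isUnit_iff_ne_zero,
    not_not, hsub, det_blockDiagonal, Finset.prod_eq_zero_iff, Finset.mem_univ, true_and]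

lemma spectrum_kronecker_diagonal (A : Matrix m m K) (d : o → K) :
    spectrum K (A ⊗ₖ diagonal d) = ⋃ k, spectrum K (d k • A) := by
  simp only [kronecker_diagonal, spectrum_blockDiagonal, op_smul_eq_smul]

lemma spectrum_kronecker_eq_of_mul_eq_mul (A : Matrix m m K) {B D Q : Matrix o o K}
    (hQ : IsUnit Q) (h : B * Q = Q * D) : spectrum K (A ⊗ₖ B) = spectrum K (A ⊗ₖ D) := by
  refine spectrum_eq_of_mul_eq_mul (u := 1 ⊗ₖ Q) ?_ ?_
  · rw [isUnit_iff_isUnit_det, det_kronecker, det_one, one_pow, one_mul]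
    exact ((isUnit_iff_isUnit_det Q).mp hQ).pow _
  · rw [← mul_kronecker_mul, ← mul_kronecker_mul, mul_one, one_mul, h]

/-- Two involutions `B`, `D` satisfy `B (B + D) = (B + D) D`, so `B` is similar to `D`
as soon as `B + D` is invertible. -/
lemma spectrum_kronecker_of_involution (A : Matrix m m K) {B : Matrix (Fin 2) (Fin 2) K}
    (hB : B * B = 1) (hBD : IsUnit (B + diagonal ![1, -1])) :
    spectrum K (A ⊗ₖ B) = spectrum K A ∪ -spectrum K A := by
  set D : Matrix (Fin 2) (Fin 2) K := diagonal ![1, -1] with hD_def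
  have hD : D * D = 1 := by
    rw [hD_def, diagonal_mul_diagonal, ← diagonal_one]
    congr 1
    ext k
    fin_cases k <;> simp
  have hsemiconj : B * (B + D) = (B + D) * D := by rw [mul_add, add_mul, hB, hD, add_comm]
  rw [spectrum_kronecker_eq_of_mul_eq_mul A hBD hsemiconj, hD_def, spectrum_kronecker_diagonal,
    spectrum.neg_eq, ← neg_one_smul K A]
  ext x
  simp [Fin.exists_fin_two]

end Spectrum

section Graph

variable {V W : Type*}

lemma Matrix.IsSymm.kronecker {α : Type*} [Mul α] {A : Matrix V V α} {B : Matrix W W α}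
    (hA : A.IsSymm) (hB : B.IsSymm) : (A ⊗ₖ B).IsSymm := by
  rw [IsSymm, ← kroneckerMap_transpose, hA.eq, hB.eq]

lemma inS_kronecker_strongProd {G : SimpleGraph V} {H : SimpleGraph W} {A : Matrix V V ℝ}
    {B : Matrix W W ℝ} (hA : inS G A) (hAdiag : ∀ i, A i i ≠ 0) (hB : inS H B)
    (hBdiag : ∀ k, B k k ≠ 0) : inS (strongProd G H) (A ⊗ₖ B) := by
  refine ⟨hA.1.kronecker hB.1, ?_⟩
  rintro ⟨i, k⟩ ⟨j, l⟩ hne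
  simp only [kroneckerMap_apply, mul_ne_zero_iff, strongProd]
  by_cases hij : i = j
  · subst hij
    have hkl : k ≠ l := fun h => hne (by rw [h])
    simp [hAdiag, hB.2 k l hkl]
  · by_cases hkl : k = l
    · subst hkl
      simp [hij, hBdiag, hA.2 i j hij]
    · rw [hA.2 i j hij, hB.2 k l hkl]
      tauto

lemma inS_top {B : Matrix W W ℝ} (hB : B.IsSymm) (hoff : ∀ k l, k ≠ l → B k l ≠ 0) :
    inS ⊤ B :=
  ⟨hB, fun k l hkl => by simpa [hkl] using hoff k l hkl⟩

lemma pathGraph_two_eq_top : SimpleGraph.pathGraph 2 = ⊤ := by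
  ext k l
  rw [SimpleGraph.pathGraph_adj, SimpleGraph.top_adj]
  omega

end Graph

section Hadamard

noncomputable def normalizedHadamard : Matrix (Fin 2) (Fin 2) ℝ :=
  (Real.sqrt 2)⁻¹ • !![1, 1; 1, -1]

lemma normalizedHadamard_apply_ne_zero (k l : Fin 2) : normalizedHadamard k l ≠ 0 := by
  fin_cases k <;> fin_cases l <;> simp [normalizedHadamard]

lemma normalizedHadamard_isSymm : normalizedHadamard.IsSymm := by
  refine IsSymm.ext fun k l => ?_
  fin_cases k <;> fin_cases l <;> rfl

lemma normalizedHadamard_mul_self : normalizedHadamard * normalizedHadamard = 1 := by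
  have hsq : (Real.sqrt 2)⁻¹ * (Real.sqrt 2)⁻¹ = 2⁻¹ := by
    rw [← mul_inv, Real.mul_self_sqrt zero_le_two]
  ext k l
  fin_cases k <;> fin_cases l <;>
    simp [normalizedHadamard, mul_apply, Fin.sum_univ_two, hsq] <;> norm_num

lemma isUnit_normalizedHadamard_add_diagonal :
    IsUnit (normalizedHadamard + diagonal ![1, -1]) := by
  rw [isUnit_iff_isUnit_det, isUnit_iff_ne_zero, det_fin_two]
  simp [normalizedHadamard]
  -- the determinant is -((s + 1)² + s²) with s = 1/√2
  nlinarith [sq_nonneg (Real.sqrt 2)⁻¹]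

end Hadamard

theorem stmt16 {n : ℕ} (G : SimpleGraph (Fin n)) (A : Matrix (Fin n) (Fin n) ℝ)
    (hA : inS G A) (hdiag : ∀ i, A i i ≠ 0)
    (hdev : -(spectrum ℝ A) = spectrum ℝ A)
    (B : Matrix (Fin 2) (Fin 2) ℝ) (hB : B = (Real.sqrt 2)⁻¹ • !![1, 1; 1, -1]) :
    inS (strongProd G (SimpleGraph.pathGraph 2)) (A ⊗ₖ B) ∧
      spectrum ℝ (A ⊗ₖ B) = spectrum ℝ A ∧
      qGraph (strongProd G (SimpleGraph.pathGraph 2)) ≤ (spectrum ℝ A).ncard := by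
  obtain rfl : B = normalizedHadamard := hB
  have hS : inS (strongProd G (SimpleGraph.pathGraph 2)) (A ⊗ₖ normalizedHadamard) := by
    refine inS_kronecker_strongProd hA hdiag ?_ fun k => normalizedHadamard_apply_ne_zero k k
    rw [pathGraph_two_eq_top]
    exact inS_top normalizedHadamard_isSymm fun k l _ => normalizedHadamard_apply_ne_zero k l
  have hspec : spectrum ℝ (A ⊗ₖ normalizedHadamard) = spectrum ℝ A := by
    rw [spectrum_kronecker_of_involution A normalizedHadamard_mul_self
      isUnit_normalizedHadamard_add_diagonal, hdev, Set.union_self]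
  exact ⟨hS, hspec, Nat.sInf_le ⟨_, hS, by rw [hspec]⟩⟩
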